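/- Let G be a finite simple graph with vertex set V, let a ≥ 1 and b ≥ 1 be integers, and let V_D' ⊆ V be such that every v ∈ V_D' satisfies |E(N^{100ab}(v))| ≤ 2b·|E(N^a(v))|. Let W_0 := {u ∈ V : dist_G(u, V_D') ≤ a} and let S be the vertex set of a connected component of G[W_0]. Then S satisfies the invariant H: (H1) for each u ∈ V_D', either N^a(u) ⊆ S or N^a(u) ∩ S = ∅; (H2) D_S ≤ 10a·N_S − (4a+1); (H3) N_S ≤ 2b. -/

import Mathlib

open Finset

/-- The subgraph of `G` induced by the vertex set `S`, viewed as a graph on all of `V`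
(vertices outside `S` are isolated). Distances between vertices of `S` in this graph agree
with distances in the induced subgraph `G[S]`. -/
def SimpleGraph.restrictS {V : Type*} (G : SimpleGraph V) (S : Set V) : SimpleGraph V where
  Adj u v := u ∈ S ∧ v ∈ S ∧ G.Adj u v
  symm := ⟨fun _ _ ⟨hu, hv, h⟩ => ⟨hv, hu, h.symm⟩⟩
  loopless := ⟨fun u ⟨_, _, h⟩ => G.loopless.irrefl u h⟩

/-- `N_S`: the maximum size of a subset `T ⊆ S ∩ V_D'` whose elements are pairwise at
`G`-distance greater than `2a`. -/
noncomputable def packing {V : Type*} [Fintype V] (G : SimpleGraph V) (VD : Set V)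
    (a : ℕ) (S : Set V) : ℕ :=
  sSup {n | ∃ T : Finset V, ↑T ⊆ S ∩ VD ∧ T.card = n ∧
    ∀ u ∈ T, ∀ v ∈ T, u ≠ v → ((2 * a : ℕ) : ℕ∞) < G.edist u v}

/-- `D_S`: the diameter of the induced subgraph `G[S]`. -/
noncomputable def setDiam {V : Type*} (G : SimpleGraph V) (S : Set V) : ℕ∞ :=
  ⨆ u ∈ S, ⨆ v ∈ S, (G.restrictS S).edist u v

/-- `E(S)`: the set of edges of `G` with both endpoints in `S`. -/
def edgesIn {V : Type*} [Fintype V] [DecidableEq V] (G : SimpleGraph V) [DecidableRel G.Adj]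
    (S : Finset V) : Finset (Sym2 V) :=
  ((S ×ˢ S).filter fun p => G.Adj p.1 p.2).image fun p => s(p.1, p.2)

/-!
Every vertex of `S` lies within `a` (in `G[S]`) of `S ∩ V_D'`, and geodesics of length `≤ 2a`
between vertices of `V_D'` stay inside `W₀`; so a maximum `2a`-separated set `T ⊆ S ∩ V_D'`,
being a `2a`-net of `S ∩ V_D'`, is a `3a`-net of `S` for the metric of `G[S]`. On a geodesic of
`G[S]`, points at spacing `6a + 1` then have pairwise distinct nearby points of `T`, which bounds
`D_S` by about `(6a + 1) N_S`; when `N_S = 1`, all of `S ∩ V_D'` is `2a`-close and `D_S ≤ 4a`.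
If `N_S > 2b`, the same sampling gives `2b + 1` points of `T` at mutual distance `O(ab)`: their
`a`-balls have disjoint edge sets inside the `100ab`-ball around the one with fewest edges,
contradicting `|E(N^{100ab}(v))| ≤ 2b |E(N^a(v))|`. Finally (H1) holds because `N^a(u)` is
connected in `G[W₀]`.
-/

namespace SimpleGraph

variable {V : Type*} {G : SimpleGraph V} {x y : V}

lemma exists_walk_length_le_of_edist_le {r : ℕ} (h : G.edist x y ≤ r) :
    ∃ p : G.Walk x y, p.length ≤ r := by
  obtain ⟨p, hp⟩ := exists_walk_of_edist_ne_top (h.trans_lt (ENat.natCast_lt_top r)).ne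
  exact ⟨p, by exact_mod_cast hp.trans_le h⟩

namespace Walk

lemma edist_getVert_le (p : G.Walk x y) (i : ℕ) : G.edist x (p.getVert i) ≤ i :=
  (edist_le (p.take i)).trans (by simp)

lemma edist_getVert_le_length_sub (p : G.Walk x y) (i : ℕ) :
    G.edist (p.getVert i) y ≤ (p.length - i : ℕ) :=
  (edist_le (p.drop i)).trans (by simp)

lemma le_edist_getVert_getVert (p : G.Walk x y) (hp : p.length = G.edist x y) {i j : ℕ}
    (hij : i ≤ j) (hj : j ≤ p.length) :
    ((j - i : ℕ) : ℕ∞) ≤ G.edist (p.getVert i) (p.getVert j) := by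
  by_contra! hlt
  lift G.edist (p.getVert i) (p.getVert j) to ℕ using (hlt.trans (ENat.natCast_lt_top _)).ne
    with m hm
  have : (p.length : ℕ∞) ≤ (i + m + (p.length - j) : ℕ) := by
    rw [hp]
    calc G.edist x y ≤ G.edist x (p.getVert i) + G.edist (p.getVert i) (p.getVert j)
          + G.edist (p.getVert j) y :=
          G.edist_triangle.trans (add_le_add G.edist_triangle le_rfl)
      _ ≤ _ := by
        rw [← hm]; push_cast
        exact add_le_add (add_le_add (p.edist_getVert_le i) le_rfl)
          (p.edist_getVert_le_length_sub j)
  have := Nat.cast_le.mp this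
  norm_cast at hlt
  omega

lemma edges_subset_edgeSet_restrictS (p : G.Walk x y) {A : Set V}
    (hA : ∀ v ∈ p.support, v ∈ A) : ∀ e ∈ p.edges, e ∈ (G.restrictS A).edgeSet := by
  intro e he
  induction e using Sym2.ind with
  | h u v => exact ⟨hA _ (p.fst_mem_support_of_mem_edges he),
      hA _ (p.snd_mem_support_of_mem_edges he), p.adj_of_mem_edges he⟩

lemma edist_restrictS_le (p : G.Walk x y) {A : Set V} (hA : ∀ v ∈ p.support, v ∈ A) :
    (G.restrictS A).edist x y ≤ p.length :=
  (edist_le (p.transfer _ (p.edges_subset_edgeSet_restrictS hA))).trans_eq (by simp)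

lemma reachable_restrictS (p : G.Walk x y) {A : Set V} (hA : ∀ v ∈ p.support, v ∈ A) :
    (G.restrictS A).Reachable x y :=
  ⟨p.transfer _ (p.edges_subset_edgeSet_restrictS hA)⟩

lemma mem_of_mem_support_restrictS {A : Set V} :
    ∀ {x y : V} (p : (G.restrictS A).Walk x y), x ∈ A → ∀ v ∈ p.support, v ∈ A
  | _, _, .nil, hx, _, hv => by rwa [mem_support_nil_iff.mp hv]
  | _, _, .cons h p, _, v, hv => by
    rcases List.mem_cons.mp hv with rfl | hv
    exacts [h.1, mem_of_mem_support_restrictS p h.2.1 v hv]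

end Walk

lemma restrictS_le (A : Set V) : G.restrictS A ≤ G := fun _ _ h => h.2.2

def IsSeparated (G : SimpleGraph V) (r : ℕ) (T : Finset V) : Prop :=
  ∀ u ∈ T, ∀ v ∈ T, u ≠ v → (r : ℕ∞) < G.edist u v

lemma isSeparated_empty (r : ℕ) : G.IsSeparated r ∅ := by
  simp [IsSeparated]

lemma IsSeparated.insert [DecidableEq V] {r : ℕ} {T : Finset V} {w : V}
    (hT : G.IsSeparated r T) (hw : ∀ t ∈ T, (r : ℕ∞) < G.edist w t) :
    G.IsSeparated r (insert w T) := by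
  simp only [IsSeparated, Finset.mem_insert]
  rintro u (rfl | hu) v (rfl | hv) huv
  · exact absurd rfl huv
  · exact hw v hv
  · exact edist_comm.trans_gt (hw u hu)
  · exact hT u hu v hv huv

section packing

variable [Fintype V] {VD S : Set V} {a : ℕ}

lemma bddAbove_packing :
    BddAbove {n | ∃ T : Finset V, ↑T ⊆ S ∩ VD ∧ T.card = n ∧ G.IsSeparated (2 * a) T} := by
  use Fintype.card V
  rintro _ ⟨T, -, rfl, -⟩
  exact T.card_le_univ

lemma card_le_packing {T : Finset V} (hT : ↑T ⊆ S ∩ VD) (hsep : G.IsSeparated (2 * a) T) :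
    T.card ≤ packing G VD a S :=
  le_csSup bddAbove_packing ⟨T, hT, rfl, hsep⟩

lemma exists_card_eq_packing :
    ∃ T : Finset V, ↑T ⊆ S ∩ VD ∧ T.card = packing G VD a S ∧ G.IsSeparated (2 * a) T := by
  refine Nat.sSup_mem ?_ bddAbove_packing
  exact ⟨0, ∅, by simp, rfl, isSeparated_empty _⟩

lemma one_le_packing {w : V} (hw : w ∈ S ∩ VD) : 1 ≤ packing G VD a S := by
  classical
  simpa using card_le_packing (G := G) (a := a) (T := {w}) (by simpa using hw)
    ((isSeparated_empty _).insert (by simp))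

lemma edist_le_of_packing_le_one (h : packing G VD a S ≤ 1) {u v : V} (hu : u ∈ S ∩ VD)
    (hv : v ∈ S ∩ VD) : G.edist u v ≤ (2 * a : ℕ) := by
  classical
  by_contra! hlt
  have hne : u ≠ v := by rintro rfl; simp at hlt
  have := card_le_packing (G := G) (VD := VD) (S := S) (T := {u, v})
    (by simp [Set.insert_subset_iff, hu.1, hu.2, hv.1, hv.2])
    (((isSeparated_empty _).insert (by simp)).insert (by simpa using hlt))
  rw [Finset.card_pair hne] at this
  omega

lemma exists_edist_le_of_card_eq_packing {T : Finset V} (hT : ↑T ⊆ S ∩ VD)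
    (hcard : T.card = packing G VD a S) (hsep : G.IsSeparated (2 * a) T) {w : V}
    (hw : w ∈ S ∩ VD) : ∃ t ∈ T, G.edist w t ≤ (2 * a : ℕ) := by
  classical
  by_contra! hfar
  have hwT : w ∉ T := fun h => by simpa using hfar w h
  have := card_le_packing (by rw [Finset.coe_insert]; exact Set.insert_subset hw hT)
    (hsep.insert hfar)
  rw [Finset.card_insert_of_notMem hwT] at this
  omega

end packing

section sampling

variable {T : Finset V} {c : ℕ}

/-- Points at spacing `2c + 1` along a geodesic have pairwise distinct `c`-close points of `T`. -/
lemma exists_subset_card_eq_of_length_eq_edist [DecidableEq V]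
    (hcov : ∀ v, G.Reachable x v → ∃ t ∈ T, G.edist v t ≤ c)
    (p : G.Walk x y) (hp : p.length = G.edist x y) {k : ℕ} (hk : k * (2 * c + 1) ≤ p.length) :
    ∃ F ⊆ T, F.card = k + 1 ∧ ∀ t ∈ F, G.edist x t ≤ (k * (2 * c + 1) + c : ℕ) := by
  set d := 2 * c + 1
  have hjd : ∀ j : Fin (k + 1), (j : ℕ) * d ≤ k * d := fun j =>
    Nat.mul_le_mul_right d (Nat.lt_succ_iff.mp j.2)
  choose f hfT hfd using fun j : Fin (k + 1) => hcov (p.getVert (j * d)) (p.take _).reachable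
  have hf : Function.Injective f := by
    intro i j hij
    by_contra hne
    wlog hlt : (i : ℕ) < j generalizing i j
    · exact this hij.symm (Ne.symm hne) (by omega)
    have hfar := p.le_edist_getVert_getVert hp (Nat.mul_le_mul_right d hlt.le) ((hjd j).trans hk)
    have hnear : G.edist (p.getVert (i * d)) (p.getVert (j * d)) ≤ (2 * c : ℕ) :=
      calc _ ≤ G.edist (p.getVert (i * d)) (f i) + G.edist (f j) (p.getVert (j * d)) :=
            hij ▸ G.edist_triangle
        _ ≤ c + c := add_le_add (hfd i) (edist_comm.trans_le (hfd j))
        _ = (2 * c : ℕ) := by push_cast; ring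
    have := Nat.cast_le.mp (hfar.trans hnear)
    have := Nat.mul_le_mul_right d (Nat.succ_le_of_lt hlt)
    rw [Nat.succ_mul] at this
    omega
  refine ⟨Finset.univ.image f, by simpa [Finset.image_subset_iff] using hfT, by
    rw [Finset.card_image_of_injective _ hf, Finset.card_univ, Fintype.card_fin], ?_⟩
  simp only [Finset.mem_image, Finset.mem_univ, true_and, forall_exists_index]
  rintro _ j rfl
  calc G.edist x (f j) ≤ G.edist x (p.getVert (j * d)) + G.edist (p.getVert (j * d)) (f j) :=
        G.edist_triangle
    _ ≤ (j * d : ℕ) + c := add_le_add (p.edist_getVert_le _) (hfd j)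
    _ ≤ (k * d + c : ℕ) := by norm_cast; exact Nat.add_le_add_right (hjd j) c

lemma exists_subset_card_le_of_lt_card [DecidableEq V]
    (hcov : ∀ v, G.Reachable x v → ∃ t ∈ T, G.edist v t ≤ c)
    (hT : ∀ t ∈ T, G.Reachable x t) {k : ℕ} (hk : k < T.card) :
    ∃ F ⊆ T, k + 1 ≤ F.card ∧ ∀ t ∈ F, G.edist x t ≤ (k * (2 * c + 1) + c : ℕ) := by
  by_cases hnear : ∀ t ∈ T, G.edist x t ≤ (k * (2 * c + 1) + c : ℕ)
  · exact ⟨T, subset_rfl, hk, hnear⟩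
  push Not at hnear
  obtain ⟨t, ht, hfar⟩ := hnear
  obtain ⟨p, hp⟩ := (hT t ht).exists_walk_length_eq_edist
  have hk : k * (2 * c + 1) ≤ p.length := by
    have := Nat.cast_lt.mp (hfar.trans_eq hp.symm)
    omega
  obtain ⟨F, hFT, hF, hFx⟩ := exists_subset_card_eq_of_length_eq_edist hcov p hp hk
  exact ⟨F, hFT, hF.ge, hFx⟩

end sampling

section closedBallFinset

variable [Fintype V]

noncomputable def closedBallFinset (G : SimpleGraph V) (v : V) (r : ℕ) : Finset V :=
  {x | G.edist v x ≤ r}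

@[simp]
lemma mem_closedBallFinset {v : V} {r : ℕ} : x ∈ G.closedBallFinset v r ↔ G.edist v x ≤ r := by
  simp [closedBallFinset]

lemma closedBallFinset_subset_closedBallFinset {u v : V} {r r' : ℕ}
    (h : G.edist u v + r ≤ r') : G.closedBallFinset v r ⊆ G.closedBallFinset u r' := fun _ hx =>
  mem_closedBallFinset.mpr <| G.edist_triangle.trans <|
    (add_le_add le_rfl (mem_closedBallFinset.mp hx)).trans h

lemma disjoint_closedBallFinset {u v : V} {r : ℕ} (h : ((2 * r : ℕ) : ℕ∞) < G.edist u v) :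
    Disjoint (G.closedBallFinset u r) (G.closedBallFinset v r) := by
  refine Finset.disjoint_left.mpr fun x hu hv => h.not_ge ?_
  calc G.edist u v ≤ G.edist u x + G.edist v x :=
        G.edist_triangle.trans_eq (congrArg (_ + ·) edist_comm)
    _ ≤ r + r := add_le_add (mem_closedBallFinset.mp hu) (mem_closedBallFinset.mp hv)
    _ = (2 * r : ℕ) := by push_cast; ring

end closedBallFinset

section edgesIn

variable [Fintype V] [DecidableEq V] [DecidableRel G.Adj]

lemma mem_edgesIn {B : Finset V} {u v : V} :
    s(u, v) ∈ edgesIn G B ↔ u ∈ B ∧ v ∈ B ∧ G.Adj u v := by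
  simp only [edgesIn, Finset.mem_image, Finset.mem_filter, Finset.mem_product, Prod.exists]
  constructor
  · rintro ⟨x, y, ⟨⟨hx, hy⟩, hxy⟩, he⟩
    rcases Sym2.eq_iff.mp he with ⟨rfl, rfl⟩ | ⟨rfl, rfl⟩
    exacts [⟨hx, hy, hxy⟩, ⟨hy, hx, hxy.symm⟩]
  · rintro ⟨hu, hv, huv⟩
    exact ⟨u, v, ⟨⟨hu, hv⟩, huv⟩, rfl⟩

lemma edgesIn_mono {B B' : Finset V} (h : B ⊆ B') : edgesIn G B ⊆ edgesIn G B' := by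
  intro e he
  induction e using Sym2.ind with
  | h u v =>
    obtain ⟨hu, hv, huv⟩ := mem_edgesIn.mp he
    exact mem_edgesIn.mpr ⟨h hu, h hv, huv⟩

lemma disjoint_edgesIn {B B' : Finset V} (h : Disjoint B B') :
    Disjoint (edgesIn G B) (edgesIn G B') := by
  refine Finset.disjoint_left.mpr fun e he he' => ?_
  induction e using Sym2.ind with
  | h u v => exact Finset.disjoint_left.mp h (mem_edgesIn.mp he).1 (mem_edgesIn.mp he').1

lemma card_mul_le_card_edgesIn {ι : Type*} {F : Finset ι} {B : ι → Finset V} {B' : Finset V}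
    {m : ℕ} (hdisj : (F : Set ι).PairwiseDisjoint B) (hsub : ∀ t ∈ F, B t ⊆ B')
    (hm : ∀ t ∈ F, m ≤ (edgesIn G (B t)).card) : F.card * m ≤ (edgesIn G B').card :=
  calc F.card * m ≤ ∑ t ∈ F, (edgesIn G (B t)).card := by
        simpa using Finset.card_nsmul_le_sum F _ m hm
    _ = (F.biUnion fun t => edgesIn G (B t)).card :=
        (Finset.card_biUnion fun _ ht _ ht' hne => disjoint_edgesIn (hdisj ht ht' hne)).symm
    _ ≤ (edgesIn G B').card :=
        Finset.card_le_card (Finset.biUnion_subset.mpr fun t ht => edgesIn_mono (hsub t ht))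

lemma card_edgesIn_closedBallFinset_pos {w t : V} {a : ℕ} (ha : 1 ≤ a) (h : G.Reachable w t)
    (hne : w ≠ t) : 0 < (edgesIn G (G.closedBallFinset w a)).card := by
  obtain ⟨p⟩ := h
  have hadj := p.adj_snd (Walk.not_nil_of_ne hne)
  refine Finset.card_pos.mpr ⟨_, mem_edgesIn.mpr ⟨?_, ?_, hadj⟩⟩
  · simp [edist_self]
  · simpa [edist_eq_one_iff_adj.mpr hadj] using ha

end edgesIn

/-- The set `W₀` of the paper (for `VD = V_D'`). -/
def closedThickening (G : SimpleGraph V) (VD : Set V) (a : ℕ) : Set V :=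
  {u | ∃ w ∈ VD, G.edist u w ≤ a}

def restrictComponent (G : SimpleGraph V) (W : Set V) (s₀ : V) : Set V :=
  {v | v ∈ W ∧ (G.restrictS W).Reachable s₀ v}

section restrictComponent

variable {W : Set V} {s₀ : V}

lemma Walk.support_subset_restrictComponent (p : G.Walk x y)
    (hx : x ∈ restrictComponent G W s₀) (hW : ∀ v ∈ p.support, v ∈ W) :
    ∀ v ∈ p.support, v ∈ restrictComponent G W s₀ := by
  classical
  exact fun v hv => ⟨hW v hv, hx.2.trans <| (p.takeUntil v hv).reachable_restrictS fun u hu =>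
    hW u (p.support_takeUntil_subset_support hv hu)⟩

lemma Walk.mem_restrictComponent_and_edist_le (p : G.Walk x y)
    (hx : x ∈ restrictComponent G W s₀) (hW : ∀ v ∈ p.support, v ∈ W) :
    y ∈ restrictComponent G W s₀ ∧
      (G.restrictS (restrictComponent G W s₀)).edist x y ≤ p.length :=
  have hC := p.support_subset_restrictComponent hx hW
  ⟨hC y p.end_mem_support, p.edist_restrictS_le hC⟩

lemma restrictComponent_reachable (hx : x ∈ restrictComponent G W s₀)
    (hy : y ∈ restrictComponent G W s₀) :
    (G.restrictS (restrictComponent G W s₀)).Reachable x y := by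
  obtain ⟨q⟩ := hx.2.symm.trans hy.2
  have hW : ∀ v ∈ (q.mapLe (restrictS_le W)).support, v ∈ W := by
    rw [Walk.support_mapLe_eq_support]
    exact q.mem_of_mem_support_restrictS hx.1
  exact Walk.reachable_restrictS _ (Walk.support_subset_restrictComponent _ hx hW)

lemma mem_restrictComponent_of_reachable (hx : x ∈ restrictComponent G W s₀)
    (h : (G.restrictS (restrictComponent G W s₀)).Reachable x y) :
    y ∈ restrictComponent G W s₀ := by
  obtain ⟨p⟩ := h
  exact p.mem_of_mem_support_restrictS hx y p.end_mem_support

end restrictComponent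

section closedThickening

variable {VD : Set V} {a : ℕ}

lemma Walk.support_subset_closedThickening (p : G.Walk x y) (hxy : x ∈ VD ∨ y ∈ VD)
    (hp : p.length ≤ a) : ∀ v ∈ p.support, v ∈ closedThickening G VD a := by
  intro v hv
  obtain ⟨i, rfl, hi⟩ := mem_support_iff_exists_getVert.mp hv
  rcases hxy with hx | hy
  · exact ⟨x, hx, edist_comm.trans_le <|
      (p.edist_getVert_le i).trans (by exact_mod_cast hi.trans hp)⟩
  · exact ⟨y, hy, (p.edist_getVert_le_length_sub i).trans
      (by exact_mod_cast (Nat.sub_le _ _).trans hp)⟩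

lemma Walk.support_subset_closedThickening_of_length_le_two_mul (p : G.Walk x y)
    (hx : x ∈ VD) (hy : y ∈ VD) (hp : p.length ≤ 2 * a) :
    ∀ v ∈ p.support, v ∈ closedThickening G VD a := by
  intro v hv
  obtain ⟨i, rfl, -⟩ := mem_support_iff_exists_getVert.mp hv
  by_cases hia : i ≤ a
  · exact ⟨x, hx, edist_comm.trans_le <| (p.edist_getVert_le i).trans (by exact_mod_cast hia)⟩
  · exact ⟨y, hy, (p.edist_getVert_le_length_sub i).trans (by exact_mod_cast (by omega))⟩

variable {s₀ : V}

local notation "C" => restrictComponent G (closedThickening G VD a) s₀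

lemma mem_restrictComponent_and_edist_le_of_edist_le (hx : x ∈ C) (hxy : x ∈ VD ∨ y ∈ VD)
    (h : G.edist x y ≤ a) : y ∈ C ∧ (G.restrictS C).edist x y ≤ a := by
  obtain ⟨p, hp⟩ := exists_walk_length_le_of_edist_le h
  obtain ⟨hy, hd⟩ := p.mem_restrictComponent_and_edist_le hx
    (p.support_subset_closedThickening hxy hp)
  exact ⟨hy, hd.trans (by exact_mod_cast hp)⟩

lemma mem_restrictComponent_and_edist_le_of_edist_le_two_mul (hx : x ∈ C) (hxVD : x ∈ VD)
    (hyVD : y ∈ VD) (h : G.edist x y ≤ (2 * a : ℕ)) : y ∈ C ∧ (G.restrictS C).edist x y ≤ (2 * a : ℕ) := by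
  obtain ⟨p, hp⟩ := exists_walk_length_le_of_edist_le h
  obtain ⟨hy, hd⟩ := p.mem_restrictComponent_and_edist_le hx
    (p.support_subset_closedThickening_of_length_le_two_mul hxVD hyVD hp)
  exact ⟨hy, hd.trans (by exact_mod_cast hp)⟩

lemma exists_mem_edist_restrictS_le (hx : x ∈ C) :
    ∃ w ∈ C ∩ VD, (G.restrictS C).edist x w ≤ a := by
  obtain ⟨w, hw, hxw⟩ := hx.1
  obtain ⟨hwC, hd⟩ := mem_restrictComponent_and_edist_le_of_edist_le hx (Or.inr hw) hxw
  exact ⟨w, ⟨hwC, hw⟩, hd⟩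

variable [Fintype V]

theorem coe_closedBallFinset_subset_or_inter_eq_empty {u : V} (hu : u ∈ VD) :
    ↑(G.closedBallFinset u a) ⊆ C ∨ ↑(G.closedBallFinset u a) ∩ C = ∅ := by
  refine (Set.eq_empty_or_nonempty _).symm.imp (fun ⟨x, hxu, hxC⟩ z hz => ?_) id
  have huC := (mem_restrictComponent_and_edist_le_of_edist_le hxC (Or.inr hu)
    (edist_comm.trans_le (mem_closedBallFinset.mp hxu))).1
  exact (mem_restrictComponent_and_edist_le_of_edist_le huC (Or.inl hu)
    (mem_closedBallFinset.mp hz)).1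

lemma exists_edist_restrictS_le_three_mul {T : Finset V} (hT : ↑T ⊆ C ∩ VD)
    (hcard : T.card = packing G VD a C) (hsep : G.IsSeparated (2 * a) T) (hx : x ∈ C) :
    ∃ t ∈ T, (G.restrictS C).edist x t ≤ (3 * a : ℕ) := by
  obtain ⟨w, hw, hxw⟩ := exists_mem_edist_restrictS_le hx
  obtain ⟨t, ht, hwt⟩ := exists_edist_le_of_card_eq_packing hT hcard hsep hw
  obtain ⟨-, hd⟩ :=
    mem_restrictComponent_and_edist_le_of_edist_le_two_mul hw.1 hw.2 (hT ht).2 hwt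
  refine ⟨t, ht, ?_⟩
  calc _ ≤ (G.restrictS C).edist x w + (G.restrictS C).edist w t :=
        (G.restrictS C).edist_triangle
    _ ≤ a + (2 * a : ℕ) := add_le_add hxw hd
    _ = (3 * a : ℕ) := by push_cast; ring

lemma edist_restrictS_le_of_packing_le_one (h : packing G VD a C ≤ 1) (hx : x ∈ C)
    (hy : y ∈ C) : (G.restrictS C).edist x y ≤ (4 * a : ℕ) := by
  obtain ⟨wx, hwx, hxw⟩ := exists_mem_edist_restrictS_le hx
  obtain ⟨wy, hwy, hyw⟩ := exists_mem_edist_restrictS_le hy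
  obtain ⟨-, hw⟩ := mem_restrictComponent_and_edist_le_of_edist_le_two_mul hwx.1 hwx.2 hwy.2
    (edist_le_of_packing_le_one h hwx hwy)
  calc _ ≤ (G.restrictS C).edist x wx + (G.restrictS C).edist wx wy
        + (G.restrictS C).edist wy y :=
        (G.restrictS C).edist_triangle.trans (add_le_add (G.restrictS C).edist_triangle le_rfl)
    _ ≤ a + (2 * a : ℕ) + a := add_le_add (add_le_add hxw hw) (edist_comm.trans_le hyw)
    _ = (4 * a : ℕ) := by push_cast; ring

lemma edist_restrictS_add_le (ha : 1 ≤ a) (hs₀ : s₀ ∈ closedThickening G VD a) (hx : x ∈ C)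
    (hy : y ∈ C) : (G.restrictS C).edist x y + ((4 * a + 1 : ℕ) : ℕ∞) ≤
      ((10 * a * packing G VD a C : ℕ) : ℕ∞) := by
  classical
  obtain ⟨T, hT, hcard, hsep⟩ := exists_card_eq_packing (G := G) (VD := VD) (a := a) (S := C)
  obtain ⟨w, hw, -⟩ := exists_mem_edist_restrictS_le (show s₀ ∈ C from ⟨hs₀, .refl _⟩)
  rcases (one_le_packing (G := G) hw).eq_or_lt with hn | hn
  · rw [← hn]
    calc _ ≤ ((4 * a : ℕ) : ℕ∞) + ((4 * a + 1 : ℕ) : ℕ∞) :=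
          add_le_add (edist_restrictS_le_of_packing_le_one hn.ge hx hy) le_rfl
      _ ≤ _ := by norm_cast; omega
  obtain ⟨p, hp⟩ := (restrictComponent_reachable hx hy).exists_walk_length_eq_edist
  have hshort : p.length < packing G VD a C * (2 * (3 * a) + 1) := by
    by_contra! hlong
    obtain ⟨F, hFT, hFcard, -⟩ := exists_subset_card_eq_of_length_eq_edist
      (fun v hv => exists_edist_restrictS_le_three_mul hT hcard hsep
        (mem_restrictComponent_of_reachable hx hv)) p hp hlong
    have := Finset.card_le_card hFT
    omega
  rw [← hp]
  norm_cast
  nlinarith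

theorem setDiam_add_le (ha : 1 ≤ a) (hs₀ : s₀ ∈ closedThickening G VD a) :
    setDiam G C + ((4 * a + 1 : ℕ) : ℕ∞) ≤ ((10 * a * packing G VD a C : ℕ) : ℕ∞) := by
  have hs₀C : s₀ ∈ C := ⟨hs₀, .refl _⟩
  have hle : setDiam G C ≤
      ((10 * a * packing G VD a C : ℕ) : ℕ∞) - ((4 * a + 1 : ℕ) : ℕ∞) :=
    iSup₂_le fun u hu => iSup₂_le fun v hv =>
      ENat.le_sub_of_add_le_right (ENat.natCast_ne_top _) (edist_restrictS_add_le ha hs₀ hu hv)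
  calc _ ≤ _ - _ + _ := add_le_add hle le_rfl
    _ = _ := tsub_add_cancel_of_le (le_add_self.trans (edist_restrictS_add_le ha hs₀ hs₀C hs₀C))

theorem packing_le_two_mul [DecidableEq V] [DecidableRel G.Adj] {b : ℕ} (ha : 1 ≤ a)
    (hb : 1 ≤ b) (hVD : ∀ v ∈ VD, (edgesIn G (G.closedBallFinset v (100 * a * b))).card ≤
      2 * b * (edgesIn G (G.closedBallFinset v a)).card) :
    packing G VD a C ≤ 2 * b := by
  by_contra! hlt
  obtain ⟨T, hT, hcard, hsep⟩ := exists_card_eq_packing (G := G) (VD := VD) (a := a) (S := C)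
  obtain ⟨v₀, hv₀⟩ : T.Nonempty := Finset.card_pos.mp (by omega)
  obtain ⟨F, hFT, hFcard, hFv₀⟩ := exists_subset_card_le_of_lt_card (G := G.restrictS C)
    (x := v₀) (c := 3 * a) (k := 2 * b)
    (fun v hv => exists_edist_restrictS_le_three_mul hT hcard hsep
      (mem_restrictComponent_of_reachable (hT hv₀).1 hv))
    (fun t ht => restrictComponent_reachable (hT hv₀).1 (hT ht).1) (by omega)
  obtain ⟨w, hwF, hwmin⟩ := F.exists_min_image (fun t => (edgesIn G (G.closedBallFinset t a)).card)
    (Finset.card_pos.mp (by omega))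
  obtain ⟨t, htF, htw⟩ := F.exists_mem_ne (by omega) w
  have hm := card_edgesIn_closedBallFinset_pos ha
    ((restrictComponent_reachable (hT (hFT hwF)).1 (hT (hFT htF)).1).mono (restrictS_le _))
    htw.symm
  have hsub : ∀ u ∈ F, G.closedBallFinset u a ⊆ G.closedBallFinset w (100 * a * b) := by
    intro u hu
    apply closedBallFinset_subset_closedBallFinset
    calc G.edist w u + a ≤ (G.restrictS C).edist v₀ w + (G.restrictS C).edist v₀ u + a :=
          add_le_add (G.edist_triangle.trans (add_le_add
            (edist_comm.trans_le (edist_anti (restrictS_le C))) (edist_anti (restrictS_le C))))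
            le_rfl
      _ ≤ _ + _ + a := add_le_add (add_le_add (hFv₀ w hwF) (hFv₀ u hu)) le_rfl
      _ ≤ (100 * a * b : ℕ) := by
        norm_cast
        nlinarith
  have hdisj : (F : Set V).PairwiseDisjoint (G.closedBallFinset · a) :=
    fun t ht t' ht' hne => disjoint_closedBallFinset (hsep t (hFT ht) t' (hFT ht') hne)
  have := (card_mul_le_card_edgesIn hdisj hsub hwmin).trans (hVD w (hT (hFT hwF)).2)
  nlinarith

end closedThickening

end SimpleGraph

open SimpleGraph

/-- Lemma B.7, base case of the invariant `H`. Let `a, b ≥ 1` and let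
`V_D' ⊆ V` be such that every `v ∈ V_D'` satisfies `|E(N^{100ab}(v))| ≤ 2b·|E(N^a(v))|`.
Let `W₀ := {u : dist_G(u, V_D') ≤ a}` and let `S` be the vertex set of a connected component
of `G[W₀]`. Then `S` satisfies the invariant `H`:
(H1) for each `u ∈ V_D'`, either `N^a(u) ⊆ S` or `N^a(u) ∩ S = ∅`;
(H2) `D_S ≤ 10a·N_S − (4a+1)`, i.e. `D_S + (4a+1) ≤ 10a·N_S`;
(H3) `N_S ≤ 2b`. -/
theorem invariant_H_base_case
    {V : Type*} [Fintype V] [DecidableEq V] (G : SimpleGraph V) [DecidableRel G.Adj]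
    (a b : ℕ) (ha : 1 ≤ a) (hb : 1 ≤ b) (VD : Set V)
    (ball : V → ℕ → Finset V)
    (hball : ∀ v r x, x ∈ ball v r ↔ G.edist v x ≤ (r : ℕ∞))
    (hVD : ∀ v ∈ VD,
      (edgesIn G (ball v (100 * a * b))).card ≤ 2 * b * (edgesIn G (ball v a)).card)
    (W₀ : Set V) (hW₀ : W₀ = {u | ∃ w ∈ VD, G.edist u w ≤ (a : ℕ∞)})
    (s₀ : V) (hs₀ : s₀ ∈ W₀)
    (S : Set V) (hS : S = {v | v ∈ W₀ ∧ (G.restrictS W₀).Reachable s₀ v}) :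
    (∀ u ∈ VD, (↑(ball u a) : Set V) ⊆ S ∨ (↑(ball u a) : Set V) ∩ S = ∅) ∧
    setDiam G S + ((4 * a + 1 : ℕ) : ℕ∞) ≤ ((10 * a * packing G VD a S : ℕ) : ℕ∞) ∧
    packing G VD a S ≤ 2 * b := by
  obtain rfl : ball = G.closedBallFinset :=
    funext₂ fun v r => Finset.ext fun x => (hball v r x).trans mem_closedBallFinset.symm
  subst hW₀ hS
  exact ⟨fun u hu => coe_closedBallFinset_subset_or_inter_eq_empty hu, setDiam_add_le ha hs₀,
    packing_le_two_mul ha hb hVD⟩
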